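/- Jittered noisy recovery condition: under the hypotheses of the jittered second-difference bound, if additionally η is a sequence with ‖η‖_∞ < ∞ and ρ((TΩ)² + 4νTΩ) + 4ρ_η < 1 where ρ = ‖g‖_∞/λ and ρ_η = ‖η‖_∞/λ, then |Δ²γ[k] + Δ²η[k]| < λ for all k, and hence M_λ(Δ²γ[k] + Δ²η[k]) = Δ²γ[k] + Δ²η[k]. -/

import Mathlib

/-!
Each sample splits as `γ k = g (k T) + e k`, where the jitter error `e k = g (t k) - g (k T)`
is at most `Ω Bg ν T` by the mean value theorem. The second difference of the uniform samples
`g (k T)` is a second difference of `g` with step `T`, hence at most `Ω² Bg T²`, while a second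
difference of any sequence is at most four times its sup norm. The condition then bounds
`|Δ²γ + Δ²η|` by `λ ρ ((TΩ)² + 4νTΩ) + 4 λ ρ_η < λ`, and on `(-λ, λ)` the centered modulo is the
identity.
-/

noncomputable def modLam (lam g : ℝ) : ℝ := g - 2 * lam * ⌊(g + lam) / (2 * lam)⌋

def seqDiff (x : ℤ → ℝ) : ℤ → ℝ := fun k => x (k + 1) - x k

theorem seqDiff_iterate_two_apply (x : ℤ → ℝ) (k : ℤ) :
    seqDiff^[2] x k = x (k + 2) - 2 * x (k + 1) + x k := by
  show seqDiff (seqDiff x) k = _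
  simp only [seqDiff, add_assoc, one_add_one_eq_two]
  ring

theorem seqDiff_iterate_two_add (x y : ℤ → ℝ) (k : ℤ) :
    seqDiff^[2] (x + y) k = seqDiff^[2] x k + seqDiff^[2] y k := by
  simp only [seqDiff_iterate_two_apply, Pi.add_apply]
  ring

theorem abs_seqDiff_iterate_two_le {x : ℤ → ℝ} {E : ℝ} (hx : ∀ j, |x j| ≤ E) (k : ℤ) :
    |seqDiff^[2] x k| ≤ 4 * E := by
  rw [seqDiff_iterate_two_apply]
  calc |x (k + 2) - 2 * x (k + 1) + x k|
      ≤ |x (k + 2)| + |-(2 * x (k + 1))| + |x k| := abs_add_three _ _ _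
    _ = |x (k + 2)| + |2 * x (k + 1)| + |x k| := by rw [abs_neg]
    _ = |x (k + 2)| + 2 * |x (k + 1)| + |x k| := by rw [abs_mul, abs_two]
    _ ≤ E + 2 * E + E := by gcongr <;> apply hx
    _ = 4 * E := by ring

theorem modLam_eq_self_of_abs_lt {lam x : ℝ} (hx : |x| < lam) : modLam lam x = x := by
  obtain ⟨hlo, hhi⟩ := abs_lt.mp hx
  have hlam : 0 < lam := (abs_nonneg x).trans_lt hx
  have hfloor : ⌊(x + lam) / (2 * lam)⌋ = 0 := by
    rw [Int.floor_eq_zero_iff]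
    exact ⟨by positivity [show 0 ≤ x + lam by linarith],
      (div_lt_one (by positivity)).mpr (by linarith)⟩
  simp [modLam, hfloor]

theorem abs_sub_le_of_abs_deriv_le {f : ℝ → ℝ} {C : ℝ} (hf : Differentiable ℝ f)
    (hC : ∀ x, |deriv f x| ≤ C) (a b : ℝ) : |f a - f b| ≤ C * |a - b| := by
  simpa using convex_univ.norm_image_sub_le_of_norm_deriv_le (fun x _ => hf x)
    (fun x _ => hC x) (Set.mem_univ b) (Set.mem_univ a)

/-- The first difference `s ↦ f (s + h) - f s` has derivative at most `C |h|`, so its own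
increment over `h` is at most `C h²`. -/
theorem abs_second_difference_le {f : ℝ → ℝ} {C : ℝ} (hf : ContDiff ℝ 2 f)
    (hC : ∀ x, |iteratedDeriv 2 f x| ≤ C) (a h : ℝ) :
    |f (a + 2 * h) - 2 * f (a + h) + f a| ≤ C * h ^ 2 := by
  have hf₁ : Differentiable ℝ f := hf.differentiable (by norm_num)
  have hf₂ : Differentiable ℝ (deriv f) :=
    ((contDiff_succ_iff_deriv (n := 1)).mp hf).2.2.differentiable (by norm_num)
  have hC' : ∀ x, |deriv (deriv f) x| ≤ C := by
    simpa only [iteratedDeriv_succ, iteratedDeriv_zero] using hC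
  set D : ℝ → ℝ := fun s => f (s + h) - f s
  have hD : ∀ s, HasDerivAt D (deriv f (s + h) - deriv f s) s := fun s =>
    ((hf₁ (s + h)).hasDerivAt.comp_add_const s h).sub (hf₁ s).hasDerivAt
  have hD' : ∀ s, |deriv D s| ≤ C * |h| := fun s => by
    simpa [(hD s).deriv] using abs_sub_le_of_abs_deriv_le hf₂ hC' (s + h) s
  calc |f (a + 2 * h) - 2 * f (a + h) + f a| = |D (a + h) - D a| := by
        simp only [D]; ring_nf
    _ ≤ C * |h| * |a + h - a| :=
      abs_sub_le_of_abs_deriv_le (fun s => (hD s).differentiableAt) hD' _ _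
    _ = C * h ^ 2 := by rw [add_sub_cancel_left, mul_assoc, abs_mul_abs_self, sq]

theorem abs_seqDiff_iterate_two_jittered_samples_le {f : ℝ → ℝ} {L M T δ : ℝ}
    (hf : ContDiff ℝ 2 f) (hf₁ : ∀ x, |deriv f x| ≤ L) (hf₂ : ∀ x, |iteratedDeriv 2 f x| ≤ M)
    {μ : ℤ → ℝ} (hμ : ∀ k, |μ k| ≤ δ) (k : ℤ) :
    |seqDiff^[2] (fun j : ℤ => f (j * T + μ j)) k| ≤ M * T ^ 2 + 4 * (L * δ) := by
  set uniform : ℤ → ℝ := fun j => f (j * T)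
  set jitter : ℤ → ℝ := fun j => f (j * T + μ j) - f (j * T)
  have hsplit : (fun j : ℤ => f (j * T + μ j)) = uniform + jitter :=
    funext fun j => by simp [uniform, jitter]
  have huniform : |seqDiff^[2] uniform k| ≤ M * T ^ 2 := by
    simpa [seqDiff_iterate_two_apply, uniform, add_mul, add_assoc] using
      abs_second_difference_le hf hf₂ (k * T) T
  have hjitter : ∀ j, |jitter j| ≤ L * δ := fun j => by
    have hLip := abs_sub_le_of_abs_deriv_le (hf.differentiable (by norm_num)) hf₁
      (j * T + μ j) (j * T)
    rw [add_sub_cancel_left] at hLip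
    exact hLip.trans (mul_le_mul_of_nonneg_left (hμ j) ((abs_nonneg _).trans (hf₁ 0)))
  rw [hsplit, seqDiff_iterate_two_add]
  exact (abs_add_le _ _).trans (add_le_add huniform (abs_seqDiff_iterate_two_le hjitter k))

theorem jittered_noisy_recovery_condition_general
    (g : ℝ → ℝ) (hg : ContDiff ℝ 2 g)
    (Ω Bg T ν lam Eη ρ ρη : ℝ)
    (hlam : 0 < lam)
    (hBern1 : ∀ t : ℝ, |deriv g t| ≤ Ω * Bg)
    (hBern2 : ∀ t : ℝ, |iteratedDeriv 2 g t| ≤ Ω ^ 2 * Bg)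
    (μ : ℤ → ℝ) (hμ : ∀ k : ℤ, |μ k| ≤ ν * T)
    (t : ℤ → ℝ) (ht : ∀ k : ℤ, t k = k * T + μ k)
    (γ : ℤ → ℝ) (hγ : ∀ k : ℤ, γ k = g (t k))
    (η : ℤ → ℝ) (hη : ∀ k : ℤ, |η k| ≤ Eη)
    (hρ : ρ = Bg / lam) (hρη : ρη = Eη / lam)
    (hcond : ρ * ((T * Ω) ^ 2 + 4 * ν * T * Ω) + 4 * ρη < 1) :
    ∀ k : ℤ, |seqDiff^[2] γ k + seqDiff^[2] η k| < lam ∧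
      modLam lam (seqDiff^[2] γ k + seqDiff^[2] η k)
        = seqDiff^[2] γ k + seqDiff^[2] η k := by
  intro k
  have hsamples : γ = fun j : ℤ => g (j * T + μ j) := funext fun j => by rw [hγ, ht]
  have hΔγ : |seqDiff^[2] γ k| ≤ Bg * ((T * Ω) ^ 2 + 4 * ν * T * Ω) := by
    rw [hsamples]
    refine (abs_seqDiff_iterate_two_jittered_samples_le hg hBern1 hBern2 hμ k).trans_eq ?_
    ring
  have hΔη : |seqDiff^[2] η k| ≤ 4 * Eη := abs_seqDiff_iterate_two_le hη k
  have hbudget : Bg * ((T * Ω) ^ 2 + 4 * ν * T * Ω) + 4 * Eη < lam := by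
    rw [hρ, hρη] at hcond
    calc Bg * ((T * Ω) ^ 2 + 4 * ν * T * Ω) + 4 * Eη
        = lam * (Bg / lam * ((T * Ω) ^ 2 + 4 * ν * T * Ω) + 4 * (Eη / lam)) := by
          field_simp
      _ < lam * 1 := mul_lt_mul_of_pos_left hcond hlam
      _ = lam := mul_one lam
  have hlt : |seqDiff^[2] γ k + seqDiff^[2] η k| < lam :=
    ((abs_add_le _ _).trans (add_le_add hΔγ hΔη)).trans_lt hbudget
  exact ⟨hlt, modLam_eq_self_of_abs_lt hlt⟩

theorem jittered_noisy_recovery_condition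
    (g : ℝ → ℝ) (hg : ContDiff ℝ 2 g)
    (Ω Bg T ν lam Eη ρ ρη : ℝ) (hΩ : 0 < Ω) (hT : 0 < T) (hν : 0 ≤ ν)
    (hlam : 0 < lam)
    (hBg : ∀ t : ℝ, |g t| ≤ Bg)
    (hBern1 : ∀ t : ℝ, |deriv g t| ≤ Ω * Bg)
    (hBern2 : ∀ t : ℝ, |iteratedDeriv 2 g t| ≤ Ω ^ 2 * Bg)
    (μ : ℤ → ℝ) (hμ : ∀ k : ℤ, |μ k| ≤ ν * T)
    (t : ℤ → ℝ) (ht : ∀ k : ℤ, t k = k * T + μ k)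
    (γ : ℤ → ℝ) (hγ : ∀ k : ℤ, γ k = g (t k))
    (η : ℤ → ℝ) (hη : ∀ k : ℤ, |η k| ≤ Eη)
    (hρ : ρ = Bg / lam) (hρη : ρη = Eη / lam)
    (hcond : ρ * ((T * Ω) ^ 2 + 4 * ν * T * Ω) + 4 * ρη < 1) :
    ∀ k : ℤ, |seqDiff^[2] γ k + seqDiff^[2] η k| < lam ∧
      modLam lam (seqDiff^[2] γ k + seqDiff^[2] η k)
        = seqDiff^[2] γ k + seqDiff^[2] η k :=
  jittered_noisy_recovery_condition_general g hg Ω Bg T ν lam Eη ρ ρη hlam hBern1 hBern2 μ hμ t ht γ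
    hγ η hη hρ hρη hcond
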